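/- arXiv:1702.04984 — 2 statements merged into one kernel-verified Lean document; each statement's English description precedes it below -/
import Mathlib

section
/- Let (r : C^{·,·,j} → C^{·,·,j-1}) be a commuting family of bi-complexes with differentials d', d''. Define A^{ℓ,j} = {a ∈ C^{·≤ℓ,·,j} : d'(a_ℓ) = 0} (elements supported in horizontal degrees ≤ ℓ whose top horizontal component is d'-closed). Assume the horizontal complexes are r-acyclic. Then: (1) for every (d'+d'')-closed a ∈ A^{ℓ+1,j}, there exists a' ∈ A^{ℓ,j-1} with r(a) - a' ∈ (d'+d'')(C^{·,·,j}); (2) if a ∈ A^{ℓ,j} lies in (d'+d'')(A^{ℓ+1,j}), then r(a) ∈ (d'+d'')(A^{ℓ,j-1}). -/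
/-- Index set for the degree-`n` part of the total complex. -/
def TotIdx (n : ℕ) : Type := {p : ℕ × ℕ // p.1 + p.2 = n}

/-- Degree-`n`, level-`j` part of the total complex of the family of bi-complexes:
`⊕_{h+k=n} C^{h,k,j}`. -/
def TotalCxJ (C : ℕ → ℕ → ℕ → Type*) [∀ h k j, AddCommGroup (C h k j)] (n j : ℕ) :=
  ∀ p : TotIdx n, C p.1.1 p.1.2 j

instance {C : ℕ → ℕ → ℕ → Type*} [∀ h k j, AddCommGroup (C h k j)] (n j : ℕ) :
    AddCommGroup (TotalCxJ C n j) := by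
  unfold TotalCxJ; infer_instance

/-- The total differential `d' + d''` at level `j`. -/
def totalDJ {C : ℕ → ℕ → ℕ → Type*} [∀ h k j, AddCommGroup (C h k j)]
    (d1 : ∀ h k j, C h k j →+ C (h + 1) k j) (d2 : ∀ h k j, C h k j →+ C h (k + 1) j)
    (n j : ℕ) (a : TotalCxJ C n j) : TotalCxJ C (n + 1) j :=
  fun p =>
    match p with
    | ⟨(h, k), hn⟩ =>
      (match h, hn with
       | 0, _ => 0
       | h' + 1, hn => d1 h' k j (a ⟨(h', k), by omega⟩))
      +
      (match k, hn with
       | 0, _ => 0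
       | k' + 1, hn => d2 h k' j (a ⟨(h, k'), by omega⟩))

/-- The level-lowering map `r` applied componentwise to the total complex. -/
def totalR {C : ℕ → ℕ → ℕ → Type*} [∀ h k j, AddCommGroup (C h k j)]
    (r : ∀ h k j, C h k (j + 1) →+ C h k j)
    (n j : ℕ) (a : TotalCxJ C n (j + 1)) : TotalCxJ C n j :=
  fun p => r p.1.1 p.1.2 j (a p)

/-- `a ∈ A^{ℓ,j}`: the element of the total complex is supported in horizontal degrees
`≤ ℓ` and its top horizontal component (at `h = ℓ`) is `d'`-closed. -/
def MemA {C : ℕ → ℕ → ℕ → Type*} [∀ h k j, AddCommGroup (C h k j)]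
    (d1 : ∀ h k j, C h k j →+ C (h + 1) k j)
    (ℓ : ℕ) {n j : ℕ} (a : TotalCxJ C n j) : Prop :=
  (∀ p : TotIdx n, ℓ < p.1.1 → a p = 0) ∧
  (∀ k (hn : ℓ + k = n), d1 ℓ k j (a ⟨(ℓ, k), hn⟩) = 0)

section LerayHelpers
variable {C : ℕ → ℕ → ℕ → Type*} [∀ h k j, AddCommGroup (C h k j)]
variable (d1 : ∀ h k j, C h k j →+ C (h + 1) k j) (d2 : ∀ h k j, C h k j →+ C h (k + 1) j)
variable (r : ∀ h k j, C h k (j + 1) →+ C h k j)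

lemma totSub {n j : ℕ} (x y : TotalCxJ C n j) (p : TotIdx n) : (x - y) p = x p - y p := rfl

lemma totZero {n j : ℕ} (p : TotIdx n) : (0 : TotalCxJ C n j) p = 0 := rfl

lemma totR {n j : ℕ} (a : TotalCxJ C n (j + 1)) (p : TotIdx n) :
    totalR r n j a p = r p.1.1 p.1.2 j (a p) := rfl

lemma evalSS {n j : ℕ} (a : TotalCxJ C n j) (h k : ℕ) (pf : (h+1)+(k+1) = n+1)
    (pf1 : h + (k+1) = n) (pf2 : (h+1) + k = n) :
    totalDJ d1 d2 n j a ⟨(h+1,k+1),pf⟩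
      = d1 h (k+1) j (a ⟨(h,k+1), pf1⟩) + d2 (h+1) k j (a ⟨(h+1,k), pf2⟩) := rfl

lemma evalZS {n j : ℕ} (a : TotalCxJ C n j) (k : ℕ) (pf : 0+(k+1) = n+1)
    (pf1 : 0 + k = n) :
    totalDJ d1 d2 n j a ⟨(0,k+1),pf⟩ = 0 + d2 0 k j (a ⟨(0,k), pf1⟩) := rfl

lemma evalSZ {n j : ℕ} (a : TotalCxJ C n j) (h : ℕ) (pf : (h+1)+0 = n+1)
    (pf1 : h + 0 = n) :
    totalDJ d1 d2 n j a ⟨(h+1,0),pf⟩ = d1 h 0 j (a ⟨(h,0), pf1⟩) + 0 := rfl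

/-- single element supported at `(h₀,k₀)`. -/
def singleT (h₀ k₀ j : ℕ) (c : C h₀ k₀ j) : TotalCxJ C (h₀ + k₀) j :=
  fun p => if hp : p.1.1 = h₀ ∧ p.1.2 = k₀ then cast (by rw [hp.1, hp.2]) c else 0

lemma singleT_self {h₀ k₀ j : ℕ} (c : C h₀ k₀ j) (pf : h₀ + k₀ = h₀ + k₀) :
    singleT h₀ k₀ j c ⟨(h₀, k₀), pf⟩ = c := by
  simp [singleT]

lemma singleT_ne {h₀ k₀ j : ℕ} (c : C h₀ k₀ j) (p : TotIdx (h₀ + k₀)) (hne : p.1.1 ≠ h₀) :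
    singleT h₀ k₀ j c p = 0 := dif_neg (fun hp => hne hp.1)

lemma totalDJ_sub {n j : ℕ} (x y : TotalCxJ C n j) :
    totalDJ d1 d2 n j (x - y) = totalDJ d1 d2 n j x - totalDJ d1 d2 n j y := by
  funext p
  obtain ⟨⟨h, k⟩, hn⟩ := p
  have hs : ∀ q : TotIdx n, (x - y) q = x q - y q := fun _ => rfl
  erw [totSub]
  have e : x - y = (fun q => x q - y q : TotalCxJ C n j) := rfl
  erw [e]
  rcases h with _ | h <;> rcases k with _ | k <;>
    simp only [totalDJ, hs, map_sub, map_zero] <;> abel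

lemma totalDJ_zero {n j : ℕ} : totalDJ d1 d2 n j (0 : TotalCxJ C n j) = 0 := by
  funext p
  obtain ⟨⟨h, k⟩, hn⟩ := p
  have hz : ∀ q : TotIdx n, (0 : TotalCxJ C n j) q = 0 := fun _ => rfl
  have e0 : (0 : TotalCxJ C n j) = (fun _ => 0 : TotalCxJ C n j) := rfl
  erw [totZero, e0]
  rcases h with _ | h <;> rcases k with _ | k <;>
    simp only [totalDJ, hz, map_zero, add_zero, zero_add]

lemma totalR_totalDJ
    (hrd1 : ∀ h k j (x : C h k (j + 1)),
      r (h + 1) k j (d1 h k (j + 1) x) = d1 h k j (r h k j x))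
    (hrd2 : ∀ h k j (x : C h k (j + 1)),
      r h (k + 1) j (d2 h k (j + 1) x) = d2 h k j (r h k j x))
    {n j : ℕ} (x : TotalCxJ C n (j + 1)) :
    totalR r (n + 1) j (totalDJ d1 d2 n (j + 1) x)
      = totalDJ d1 d2 n j (totalR r n j x) := by
  funext p
  obtain ⟨⟨h, k⟩, hn⟩ := p
  rcases h with _ | h <;> rcases k with _ | k <;>
    simp only [totalDJ, totalR, map_add, map_zero, hrd1, hrd2]

lemma totalDJ_totalDJ
    (hd1 : ∀ h k j (x : C h k j), d1 (h + 1) k j (d1 h k j x) = 0)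
    (hd2 : ∀ h k j (x : C h k j), d2 h (k + 1) j (d2 h k j x) = 0)
    (hanti : ∀ h k j (x : C h k j),
      d1 h (k + 1) j (d2 h k j x) + d2 (h + 1) k j (d1 h k j x) = 0)
    {n j : ℕ} (x : TotalCxJ C n j) :
    totalDJ d1 d2 (n + 1) j (totalDJ d1 d2 n j x) = 0 := by
  have hanti' : ∀ h k j (x : C h k j),
      d1 h (k + 1) j (d2 h k j x) = -(d2 (h + 1) k j (d1 h k j x)) :=
    fun h k j x => eq_neg_of_add_eq_zero_left (hanti h k j x)
  funext p
  obtain ⟨⟨h, k⟩, hn⟩ := p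
  have hz : (0 : TotalCxJ C (n+1+1) j) ⟨(h,k), hn⟩ = 0 := rfl
  rw [hz]
  rcases h with _ | _ | h <;> rcases k with _ | _ | k <;>
    first
      | exact absurd hn (by omega)
      | simp only [totalDJ, map_add, map_zero, hd1, hd2, hanti', zero_add, add_zero,
          neg_add_cancel, add_neg_cancel]

lemma totalDJ_singleT_d1 {h₀ k₀ j : ℕ} (c : C h₀ k₀ j) (pf : (h₀+1)+k₀ = (h₀+k₀)+1) :
    totalDJ d1 d2 (h₀+k₀) j (singleT h₀ k₀ j c) ⟨(h₀+1,k₀),pf⟩ = d1 h₀ k₀ j c := by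
  rcases k₀ with _ | k
  · calc totalDJ d1 d2 (h₀+0) j (singleT h₀ 0 j c) ⟨(h₀+1,0),pf⟩
        = d1 h₀ 0 j (singleT h₀ 0 j c ⟨(h₀,0), rfl⟩) + 0 := rfl
      _ = d1 h₀ 0 j c := by rw [singleT_self, add_zero]
  · erw [evalSS d1 d2 _ h₀ k pf (by omega) (by omega), singleT_self,
      singleT_ne _ _ (show h₀+1 ≠ h₀ by omega), map_zero, add_zero]

lemma totalDJ_singleT_d2 {h₀ k₀ j : ℕ} (c : C h₀ k₀ j) (pf : h₀+(k₀+1) = (h₀+k₀)+1) :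
    totalDJ d1 d2 (h₀+k₀) j (singleT h₀ k₀ j c) ⟨(h₀,k₀+1),pf⟩ = d2 h₀ k₀ j c := by
  rcases h₀ with _ | h
  · calc totalDJ d1 d2 (0+k₀) j (singleT 0 k₀ j c) ⟨(0,k₀+1),pf⟩
        = 0 + d2 0 k₀ j (singleT 0 k₀ j c ⟨(0,k₀), rfl⟩) := rfl
      _ = d2 0 k₀ j c := by rw [singleT_self]; exact zero_add _
  · erw [evalSS d1 d2 _ h k₀ pf (by omega) (by omega),
      singleT_ne _ _ (show h ≠ h+1 by omega), map_zero, zero_add, singleT_self]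

lemma totalDJ_singleT_ne {h₀ k₀ j : ℕ} (c : C h₀ k₀ j) (h k : ℕ)
    (hn : h + k = (h₀+k₀)+1) (h1 : h ≠ h₀) (h2 : h ≠ h₀+1) :
    totalDJ d1 d2 (h₀+k₀) j (singleT h₀ k₀ j c) ⟨(h,k),hn⟩ = 0 := by
  rcases h with _ | h <;> rcases k with _ | k
  · exact absurd hn (by omega)
  · erw [evalZS d1 d2 _ k hn (by omega), singleT_ne _ _ (show (0:ℕ) ≠ h₀ from h1),
      map_zero, add_zero]
  · erw [evalSZ d1 d2 _ h hn (by omega), singleT_ne _ _ (show h ≠ h₀ by omega),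
      map_zero, add_zero]
  · erw [evalSS d1 d2 _ h k hn (by omega) (by omega),
      singleT_ne _ _ (show h ≠ h₀ by omega), singleT_ne _ _ (show h+1 ≠ h₀ from h1),
      map_zero, map_zero, add_zero]

lemma keyAlg
    (hanti : ∀ h k j (x : C h k j),
      d1 h (k + 1) j (d2 h k j x) + d2 (h + 1) k j (d1 h k j x) = 0)
    (hrd1 : ∀ h k j (x : C h k (j + 1)),
      r (h + 1) k j (d1 h k (j + 1) x) = d1 h k j (r h k j x))
    (hrd2 : ∀ h k j (x : C h k (j + 1)),
      r h (k + 1) j (d2 h k (j + 1) x) = d2 h k j (r h k j x))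
    {h k j : ℕ} (A : C h (k+1) (j+1)) (T : C (h+1) k (j+1)) (c : C h k j)
    (hc : d1 h k j c = r (h+1) k j T)
    (hsum : d1 h (k+1) (j+1) A + d2 (h+1) k (j+1) T = 0) :
    d1 h (k+1) j (r h (k+1) j A - d2 h k j c) = 0 := by
  have e2 := eq_neg_of_add_eq_zero_left (hanti h k j c)
  rw [map_sub, ← hrd1, e2, hc, ← hrd2, sub_neg_eq_add, ← map_add, hsum, map_zero]

end LerayHelpers
/-- The two steps of the customized Leray lemma.  Let `(r : C^{·,·,j} → C^{·,·,j-1})`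
be a commuting family of bi-complexes whose horizontal complexes are `r`-acyclic.
Then: (1) for every `(d'+d'')`-closed `a ∈ A^{ℓ+1,j+1}` there is `a' ∈ A^{ℓ,j}` with
`r a - a'` a total coboundary; (2) if `a ∈ A^{ℓ,j+1}` is a total coboundary of an
element of `A^{ℓ+1,j+1}`, then `r a` is a total coboundary of an element of `A^{ℓ,j}`. -/
theorem leray_customized_steps
    (C : ℕ → ℕ → ℕ → Type*) [∀ h k j, AddCommGroup (C h k j)]
    (d1 : ∀ h k j, C h k j →+ C (h + 1) k j)
    (d2 : ∀ h k j, C h k j →+ C h (k + 1) j)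
    (r : ∀ h k j, C h k (j + 1) →+ C h k j)
    (hd1 : ∀ h k j (x : C h k j), d1 (h + 1) k j (d1 h k j x) = 0)
    (hd2 : ∀ h k j (x : C h k j), d2 h (k + 1) j (d2 h k j x) = 0)
    (hanti : ∀ h k j (x : C h k j),
      d1 h (k + 1) j (d2 h k j x) + d2 (h + 1) k j (d1 h k j x) = 0)
    (hrd1 : ∀ h k j (x : C h k (j + 1)),
      r (h + 1) k j (d1 h k (j + 1) x) = d1 h k j (r h k j x))
    (hrd2 : ∀ h k j (x : C h k (j + 1)),
      r h (k + 1) j (d2 h k (j + 1) x) = d2 h k j (r h k j x))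
    (hacyclic : ∀ h k j (x : C (h + 1) k (j + 1)), d1 (h + 1) k (j + 1) x = 0 →
      ∃ c : C h k j, d1 h k j c = r (h + 1) k j x) :
    (∀ (ℓ n j : ℕ) (a : TotalCxJ C (n + 1) (j + 1)),
      totalDJ d1 d2 (n + 1) (j + 1) a = 0 → MemA d1 (ℓ + 1) a →
      ∃ a' : TotalCxJ C (n + 1) j, MemA d1 ℓ a' ∧
        ∃ b : TotalCxJ C n j, totalR r (n + 1) j a - a' = totalDJ d1 d2 n j b)
    ∧
    (∀ (ℓ n j : ℕ) (a : TotalCxJ C (n + 1) (j + 1)), MemA d1 ℓ a →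
      (∃ b : TotalCxJ C n (j + 1), MemA d1 (ℓ + 1) b ∧ a = totalDJ d1 d2 n (j + 1) b) →
      ∃ b' : TotalCxJ C n j, MemA d1 ℓ b' ∧
        totalR r (n + 1) j a = totalDJ d1 d2 n j b') := by
  constructor
  · -- Part 1
    intro ℓ n j a hDa ha
    obtain ⟨ha1, ha2⟩ := ha
    by_cases hln : ℓ ≤ n
    · obtain ⟨k₀, rfl⟩ : ∃ k₀, n = ℓ + k₀ := ⟨n - ℓ, by omega⟩
      have htop : d1 (ℓ+1) k₀ (j+1) (a ⟨(ℓ+1, k₀), by omega⟩) = 0 := ha2 k₀ (by omega)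
      obtain ⟨c, hc⟩ := hacyclic ℓ k₀ j _ htop
      refine ⟨totalR r (ℓ+k₀+1) j a - totalDJ d1 d2 (ℓ+k₀) j (singleT ℓ k₀ j c),
        ⟨?_, ?_⟩, ⟨singleT ℓ k₀ j c, by abel⟩⟩
      · -- support
        rintro ⟨⟨h, k⟩, hn⟩ hp
        replace hp : ℓ < h := hp
        erw [totSub, totR]
        rcases h with _ | h
        · exact absurd hp (by omega)
        by_cases hh : h = ℓ
        · subst hh
          obtain rfl : k = k₀ := by omega
          rw [totalDJ_singleT_d1, hc]
          exact sub_self _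
        · erw [ha1 _ (show ℓ + 1 < h + 1 by omega), map_zero,
            totalDJ_singleT_ne d1 d2 c (h+1) k hn (by omega) (by omega)]
          exact sub_self _
      · -- top d1-closedness
        intro k hk
        obtain rfl : k = k₀ + 1 := by omega
        erw [totSub, totR, totalDJ_singleT_d2]
        have hsum := congrFun hDa ⟨(ℓ+1, k₀+1), by omega⟩
        erw [evalSS d1 d2 a ℓ k₀ (by omega) (by omega) (by omega), totZero] at hsum
        exact keyAlg d1 d2 r hanti hrd1 hrd2 _ _ c hc hsum
    · -- degenerate case ℓ > n
      refine ⟨totalR r (n+1) j a, ⟨?_, ?_⟩, ⟨0, by rw [totalDJ_zero]; exact sub_self _⟩⟩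
      · rintro ⟨⟨h, k⟩, hn⟩ hp
        replace hp : ℓ < h := hp
        exact absurd hn (by omega)
      · intro k hk
        obtain rfl : k = 0 := by omega
        have hℓ : ℓ = n + 1 := by omega
        subst hℓ
        erw [totR, ← hrd1]
        have h0 := congrFun hDa ⟨(n+1+1, 0), by omega⟩
        erw [evalSZ d1 d2 a (n+1) (by omega) (by omega), totZero] at h0
        have h0' : d1 (n+1) 0 (j+1) (a ⟨(n+1, 0), hk⟩) = 0 := by
          simpa using h0
        rw [h0', map_zero]
  · -- Part 2
    intro ℓ n j a ha hb
    obtain ⟨ha1, ha2⟩ := ha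
    obtain ⟨b, ⟨hb1, hb2⟩, hab⟩ := hb
    by_cases hln : ℓ < n
    · obtain ⟨m, rfl⟩ : ∃ m, n = m + 1 := ⟨n - 1, by omega⟩
      obtain ⟨k₁, rfl⟩ : ∃ k₁, m = ℓ + k₁ := ⟨m - ℓ, by omega⟩
      have htop : d1 (ℓ+1) k₁ (j+1) (b ⟨(ℓ+1, k₁), by omega⟩) = 0 := hb2 k₁ (by omega)
      obtain ⟨c, hc⟩ := hacyclic ℓ k₁ j _ htop
      refine ⟨totalR r (ℓ+k₁+1) j b - totalDJ d1 d2 (ℓ+k₁) j (singleT ℓ k₁ j c),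
        ⟨?_, ?_⟩, ?_⟩
      · -- support
        rintro ⟨⟨h, k⟩, hn⟩ hp
        replace hp : ℓ < h := hp
        erw [totSub, totR]
        rcases h with _ | h
        · exact absurd hp (by omega)
        by_cases hh : h = ℓ
        · subst hh
          obtain rfl : k = k₁ := by omega
          rw [totalDJ_singleT_d1, hc]
          exact sub_self _
        · erw [hb1 _ (show ℓ + 1 < h + 1 by omega), map_zero,
            totalDJ_singleT_ne d1 d2 c (h+1) k hn (by omega) (by omega)]
          exact sub_self _
      · -- top d1-closedness
        intro k hk
        obtain rfl : k = k₁ + 1 := by omega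
        erw [totSub, totR, totalDJ_singleT_d2]
        have hsum := congrFun hab ⟨(ℓ+1, k₁+1), by omega⟩
        erw [evalSS d1 d2 b ℓ k₁ (by omega) (by omega) (by omega),
          ha1 _ (Nat.lt_succ_self ℓ)] at hsum
        exact keyAlg d1 d2 r hanti hrd1 hrd2 _ _ c hc hsum.symm
      · -- coboundary identity
        rw [hab, totalDJ_sub, totalDJ_totalDJ d1 d2 hd1 hd2 hanti, sub_zero,
          totalR_totalDJ d1 d2 r hrd1 hrd2]
    · -- degenerate case n ≤ ℓ
      refine ⟨totalR r n j b, ⟨?_, ?_⟩, ?_⟩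
      · rintro ⟨⟨h, k⟩, hn⟩ hp
        replace hp : ℓ < h := hp
        exact absurd hn (by omega)
      · intro k hk
        obtain rfl : k = 0 := by omega
        have hℓ : ℓ = n := by omega
        subst hℓ
        erw [totR, ← hrd1]
        have h1 := congrFun hab ⟨(ℓ+1, 0), by omega⟩
        rw [evalSZ d1 d2 b ℓ (by omega) (by omega)] at h1
        have h2 := (ha1 ⟨(ℓ+1, 0), by omega⟩ (Nat.lt_succ_self ℓ)).symm.trans h1
        have h3 : d1 ℓ 0 (j+1) (b ⟨(ℓ, 0), hk⟩) = 0 := by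
          simpa using h2.symm
        rw [h3, map_zero]
      · rw [hab, totalR_totalDJ d1 d2 r hrd1 hrd2]
end

section
/- Let X be a simplicial complex with a cocompact automorphism group action and vanishing cohomology (equivalently vanishing reduced homology) up to degree L. Then X has uniformly vanishing cohomology up to degree L: for every R > 0 there exists R̃(R) such that for every vertex y, the map H^j(B(y,R̃)) → H^j(B(y,R)) induced by inclusion vanishes for all j = 0,…,L. -/
/-- A tuple of vertices spans a simplex of the simplicial complex `K` with all its
vertices in the set `S`. -/
def IsSimplexTuple {V : Type*} [DecidableEq V] (K : Set (Finset V)) (S : Set V)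
    {j : ℕ} (x : Fin j → V) : Prop :=
  Finset.image x Finset.univ ∈ K ∧ ∀ i, x i ∈ S

/-- Simplicial coboundary on ordered cochains:
`(δf)(x_0,…,x_{j+1}) = ∑ ℓ (-1)^ℓ f(x_0,…,x̂_ℓ,…,x_{j+1})`. -/
noncomputable def simpCoboundary {V : Type*} (j : ℕ) (f : (Fin (j + 1) → V) → ℝ) :
    (Fin (j + 2) → V) → ℝ :=
  fun x => ∑ ℓ : Fin (j + 2), (-1 : ℝ) ^ (ℓ : ℕ) * f (x ∘ Fin.succAbove ℓ)

/-- The combinatorial `R`-ball around a vertex `y`: vertices reachable from `y` in at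
most `R` steps along edges of `K`. -/
def simpBall {V : Type*} [DecidableEq V] (K : Set (Finset V)) : ℕ → V → Set V
  | 0, y => {y}
  | R + 1, y => {w | ∃ v ∈ simpBall K R y, v = w ∨ ({v, w} : Finset V) ∈ K}

/-- The map `H^j(T) → H^j(S)` (reduced in degree `0`) induced by restriction of
cochains vanishes for all `j = 0, …, L`: every `0`-cocycle on `T`-simplices is
constant on `S`-simplices, and every `j`-cocycle on `T`-simplices, `1 ≤ j ≤ L`,
restricts to a coboundary on `S`-simplices. -/
def CohoMapVanishes {V : Type*} [DecidableEq V] (K : Set (Finset V))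
    (S T : Set V) (L : ℕ) : Prop :=
  (∀ f : (Fin 1 → V) → ℝ,
      (∀ x : Fin 2 → V, IsSimplexTuple K T x → simpCoboundary 0 f x = 0) →
      ∃ c : ℝ, ∀ x : Fin 1 → V, IsSimplexTuple K S x → f x = c) ∧
  (∀ j : ℕ, j + 1 ≤ L → ∀ f : (Fin (j + 2) → V) → ℝ,
      (∀ x : Fin (j + 3) → V, IsSimplexTuple K T x → simpCoboundary (j + 1) f x = 0) →
      ∃ g : (Fin (j + 1) → V) → ℝ,
        ∀ x : Fin (j + 2) → V, IsSimplexTuple K S x → f x = simpCoboundary j g x)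

section Helpers

variable {V : Type*} [DecidableEq V] {K : Set (Finset V)}

lemma simpBall_subset_succ (n : ℕ) (y : V) : simpBall K n y ⊆ simpBall K (n + 1) y :=
  fun v hv => ⟨v, hv, Or.inl rfl⟩

lemma simpBall_mono {m n : ℕ} (h : m ≤ n) (y : V) : simpBall K m y ⊆ simpBall K n y := by
  induction n, h using Nat.le_induction with
  | base => exact subset_rfl
  | succ n _ ih => exact ih.trans (simpBall_subset_succ n y)

lemma simpBall_finite (hbddgeo : ∀ v : V, {s ∈ K | v ∈ s}.Finite) (n : ℕ) (y : V) :
    (simpBall K n y).Finite := by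
  induction n with
  | zero => exact Set.finite_singleton y
  | succ n ih =>
    have hsub : simpBall K (n + 1) y ⊆
        ⋃ v ∈ simpBall K n y, ({v} ∪ {w | ({v, w} : Finset V) ∈ K}) := by
      rintro w ⟨v, hv, h⟩
      refine Set.mem_biUnion hv ?_
      rcases h with rfl | h
      · exact Or.inl rfl
      · exact Or.inr h
    refine Set.Finite.subset (Set.Finite.biUnion ih ?_) hsub
    intro v _
    refine (Set.finite_singleton v).union ?_
    have hpre : {w | ({v, w} : Finset V) ∈ K} ⊆
        (fun w => ({v, w} : Finset V)) ⁻¹' {s ∈ K | v ∈ s} := by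
      intro w hw
      exact ⟨hw, Finset.mem_insert_self v _⟩
    refine Set.Finite.subset (Set.Finite.preimage ?_ (hbddgeo v)) hpre
    intro w _ w' _ h
    have h' : ({v, w} : Finset V) = {v, w'} := h
    have hw : w = v ∨ w = w' := by
      have : w ∈ ({v, w'} : Finset V) := by rw [← h']; simp
      simpa using this
    have hw' : w' = v ∨ w' = w := by
      have : w' ∈ ({v, w} : Finset V) := by rw [h']; simp
      simpa using this
    rcases hw with rfl | rfl
    · rcases hw' with rfl | rfl <;> rfl
    · rfl

lemma IsSimplexTuple.mono {S S' : Set V} (h : S ⊆ S') {k : ℕ} {x : Fin k → V}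
    (hx : IsSimplexTuple K S x) : IsSimplexTuple K S' x :=
  ⟨hx.1, fun i => h (hx.2 i)⟩

lemma IsSimplexTuple.face (hdown : ∀ s ∈ K, ∀ t, t ⊆ s → t ∈ K) {S : Set V} {k : ℕ}
    {x : Fin (k + 1) → V} (hx : IsSimplexTuple K S x) (ℓ : Fin (k + 1)) :
    IsSimplexTuple K S (x ∘ Fin.succAbove ℓ) := by
  refine ⟨hdown _ hx.1 _ ?_, fun i => hx.2 _⟩
  intro a ha
  simp only [Finset.mem_image, Finset.mem_univ, true_and] at ha ⊢
  obtain ⟨i, rfl⟩ := ha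
  exact ⟨_, rfl⟩

lemma simpCoboundary_congr {j : ℕ} {f g : (Fin (j + 1) → V) → ℝ} {x : Fin (j + 2) → V}
    (h : ∀ ℓ : Fin (j + 2), f (x ∘ Fin.succAbove ℓ) = g (x ∘ Fin.succAbove ℓ)) :
    simpCoboundary j f x = simpCoboundary j g x :=
  Finset.sum_congr rfl fun ℓ _ => by rw [h ℓ]

lemma tuple_absorb (hdown : ∀ s ∈ K, ∀ t, t ⊆ s → t ∈ K) {k n : ℕ} {x : Fin k → V}
    (hx : Finset.image x Finset.univ ∈ K) {y : V} {i : Fin k}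
    (hi : x i ∈ simpBall K n y) (i' : Fin k) : x i' ∈ simpBall K (n + 1) y := by
  refine ⟨x i, hi, ?_⟩
  by_cases h : x i = x i'
  · exact Or.inl h
  · refine Or.inr (hdown _ hx _ ?_)
    simp only [Finset.insert_subset_iff, Finset.singleton_subset_iff]
    exact ⟨Finset.mem_image_of_mem x (Finset.mem_univ i),
      Finset.mem_image_of_mem x (Finset.mem_univ i')⟩

lemma h0_const {n : ℕ} {y : V} (f : (Fin 1 → V) → ℝ)
    (hf : ∀ x : Fin 2 → V, IsSimplexTuple K (simpBall K n y) x → simpCoboundary 0 f x = 0) :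
    ∀ v ∈ simpBall K n y, f (fun _ => v) = f (fun _ => y) := by
  induction n with
  | zero => rintro v rfl; rfl
  | succ n ih =>
    rintro v ⟨u, hu, h⟩
    have hu' : f (fun _ => u) = f (fun _ => y) :=
      ih (fun x hx => hf x (hx.mono (simpBall_subset_succ n y))) u hu
    rcases h with rfl | hedge
    · exact hu'
    · have hxt : IsSimplexTuple K (simpBall K (n + 1) y) ![u, v] := by
        constructor
        · have : Finset.image ![u, v] Finset.univ = {u, v} := by
            ext a
            simp [Fin.exists_fin_two, eq_comm]
          rw [this]; exact hedge
        · intro i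
          fin_cases i
          · exact simpBall_subset_succ n y hu
          · exact ⟨u, hu, Or.inr hedge⟩
      have h0 := hf ![u, v] hxt
      have e0 : (![u, v] ∘ Fin.succAbove 0) = (fun _ => v) := by
        funext i
        have : i = 0 := Subsingleton.elim i 0
        subst this; rfl
      have e1 : (![u, v] ∘ Fin.succAbove 1) = (fun _ => u) := by
        funext i
        have : i = 0 := Subsingleton.elim i 0
        subst this; rfl
      rw [simpCoboundary, Fin.sum_univ_two, e0, e1] at h0
      have : f (fun _ => v) = f (fun _ => u) := by
        simp at h0
        linarith
      rw [this]; exact hu'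

end Helpers

section Equiv

variable {V : Type*} [DecidableEq V] {K : Set (Finset V)}

lemma tuple_map (e : Equiv.Perm V) (he : ∀ s ∈ K, Finset.image (⇑e) s ∈ K)
    {S : Set V} {k : ℕ} {x : Fin k → V} (hx : IsSimplexTuple K S x) :
    IsSimplexTuple K (⇑e '' S) (⇑e ∘ x) := by
  constructor
  · have : Finset.image (⇑e ∘ x) Finset.univ = Finset.image (⇑e) (Finset.image x Finset.univ) :=
      (Finset.image_image).symm
    rw [this]
    exact he _ hx.1
  · intro i
    exact ⟨x i, hx.2 i, rfl⟩

lemma cohoVanishes_mono {S T T' : Set V} {L : ℕ} (hTT' : T ⊆ T')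
    (h : CohoMapVanishes K S T L) : CohoMapVanishes K S T' L := by
  constructor
  · intro f hf
    exact h.1 f (fun x hx => hf x (hx.mono hTT'))
  · intro j hj f hf
    exact h.2 j hj f (fun x hx => hf x (hx.mono hTT'))

lemma cohoVanishes_image (e : Equiv.Perm V)
    (he : ∀ s ∈ K, Finset.image (⇑e) s ∈ K) (he' : ∀ s ∈ K, Finset.image (⇑e.symm) s ∈ K)
    {S T : Set V} {L : ℕ}
    (h : CohoMapVanishes K (⇑e '' S) (⇑e '' T) L) : CohoMapVanishes K S T L := by
  constructor
  · intro f hf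
    have hf' : ∀ x : Fin 2 → V, IsSimplexTuple K (⇑e '' T) x →
        simpCoboundary 0 (fun z => f (⇑e.symm ∘ z)) x = 0 := by
      intro x hx
      have hT : IsSimplexTuple K T (⇑e.symm ∘ x) := by
        have := tuple_map e.symm he' hx
        rwa [Equiv.symm_image_image] at this
      exact hf (⇑e.symm ∘ x) hT
    obtain ⟨c, hc⟩ := h.1 (fun z => f (⇑e.symm ∘ z)) hf'
    refine ⟨c, fun x hx => ?_⟩
    have h1 := hc (⇑e ∘ x) (tuple_map e he hx)
    have hxx : ⇑e.symm ∘ (⇑e ∘ x) = x := by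
      funext i; simp
    rw [hxx] at h1
    exact h1
  · intro j hj f hf
    have hf' : ∀ x : Fin (j + 3) → V, IsSimplexTuple K (⇑e '' T) x →
        simpCoboundary (j + 1) (fun z => f (⇑e.symm ∘ z)) x = 0 := by
      intro x hx
      have hT : IsSimplexTuple K T (⇑e.symm ∘ x) := by
        have := tuple_map e.symm he' hx
        rwa [Equiv.symm_image_image] at this
      exact hf (⇑e.symm ∘ x) hT
    obtain ⟨g, hg⟩ := h.2 j hj (fun z => f (⇑e.symm ∘ z)) hf'
    refine ⟨fun z => g (⇑e ∘ z), fun x hx => ?_⟩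
    have h1 := hg (⇑e ∘ x) (tuple_map e he hx)
    have hxx : ⇑e.symm ∘ (⇑e ∘ x) = x := by
      funext i; simp
    rw [hxx] at h1
    exact h1

lemma ball_image_subset (e : Equiv.Perm V) (he : ∀ s ∈ K, Finset.image (⇑e) s ∈ K)
    (n : ℕ) (y : V) : ⇑e '' simpBall K n y ⊆ simpBall K n (e y) := by
  induction n with
  | zero =>
    rintro w ⟨v, hv, rfl⟩
    rw [Set.mem_singleton_iff.mp hv]
    rfl
  | succ n ih =>
    rintro w ⟨v, ⟨u, hu, h⟩, rfl⟩
    refine ⟨e u, ih (Set.mem_image_of_mem _ hu), ?_⟩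
    rcases h with rfl | hedge
    · exact Or.inl rfl
    · refine Or.inr ?_
      have : Finset.image (⇑e) ({u, v} : Finset V) = {e u, e v} := by
        rw [Finset.image_insert, Finset.image_singleton]
      rw [← this]
      exact he _ hedge

lemma ball_image (e : Equiv.Perm V) (he : ∀ s ∈ K, Finset.image (⇑e) s ∈ K)
    (he' : ∀ s ∈ K, Finset.image (⇑e.symm) s ∈ K) (n : ℕ) (y : V) :
    simpBall K n (e y) = ⇑e '' simpBall K n y := by
  apply Set.Subset.antisymm
  · intro w hw
    have h1 : e.symm w ∈ simpBall K n y := by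
      have := ball_image_subset e.symm he' n (e y) (Set.mem_image_of_mem _ hw)
      rwa [Equiv.symm_apply_apply] at this
    exact ⟨e.symm w, h1, Equiv.apply_symm_apply e w⟩
  · exact ball_image_subset e he n y

end Equiv

section Core

variable {V : Type*} [DecidableEq V]

lemma lemA (K : Set (Finset V))
    (hdown : ∀ s ∈ K, ∀ t, t ⊆ s → t ∈ K)
    (hbddgeo : ∀ v : V, {s ∈ K | v ∈ s}.Finite)
    (j : ℕ)
    (hvan : ∀ f : (Fin (j + 2) → V) → ℝ,
      (∀ x : Fin (j + 3) → V, IsSimplexTuple K Set.univ x → simpCoboundary (j + 1) f x = 0) →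
      ∃ g : (Fin (j + 1) → V) → ℝ,
        ∀ x : Fin (j + 2) → V, IsSimplexTuple K Set.univ x → f x = simpCoboundary j g x)
    (y : V) (R : ℕ) :
    ∃ R' : ℕ, R ≤ R' ∧ ∀ f : (Fin (j + 2) → V) → ℝ,
      (∀ x : Fin (j + 3) → V, IsSimplexTuple K (simpBall K R' y) x →
        simpCoboundary (j + 1) f x = 0) →
      ∃ g : (Fin (j + 1) → V) → ℝ,
        ∀ x : Fin (j + 2) → V, IsSimplexTuple K (simpBall K R y) x →
          f x = simpCoboundary j g x := by
  classical
  -- the submodule of cocycles on the ball of radius `n`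
  set Z : ℕ → Submodule ℝ ((Fin (j + 2) → V) → ℝ) := fun n =>
    { carrier := {f | ∀ x : Fin (j + 3) → V, IsSimplexTuple K (simpBall K n y) x →
        simpCoboundary (j + 1) f x = 0}
      add_mem' := by
        intro f g hf hg x hx
        have : simpCoboundary (j + 1) (f + g) x =
            simpCoboundary (j + 1) f x + simpCoboundary (j + 1) g x := by
          rw [simpCoboundary, simpCoboundary, simpCoboundary, ← Finset.sum_add_distrib]
          exact Finset.sum_congr rfl fun ℓ _ => by simp [mul_add]
        rw [this, hf x hx, hg x hx, add_zero]
      zero_mem' := by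
        intro x _
        simp [simpCoboundary]
      smul_mem' := by
        intro c f hf x hx
        have : simpCoboundary (j + 1) (c • f) x = c * simpCoboundary (j + 1) f x := by
          rw [simpCoboundary, simpCoboundary, Finset.mul_sum]
          exact Finset.sum_congr rfl fun ℓ _ => by simp; ring
        rw [this, hf x hx, mul_zero] } with hZdef
  have hZmem : ∀ (n : ℕ) (f : (Fin (j + 2) → V) → ℝ), f ∈ Z n ↔
      ∀ x : Fin (j + 3) → V, IsSimplexTuple K (simpBall K n y) x →
        simpCoboundary (j + 1) f x = 0 := fun n f => Iff.rfl
  -- finiteness of tuple types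
  have hfin : ∀ m : ℕ, Finite {x : Fin (j + 2) → V // IsSimplexTuple K (simpBall K m y) x} := by
    intro m
    have h1 : {x : Fin (j + 2) → V | IsSimplexTuple K (simpBall K m y) x}.Finite := by
      refine Set.Finite.subset (Set.Finite.pi' fun _ : Fin (j + 2) =>
        simpBall_finite hbddgeo m y) ?_
      intro x hx
      exact fun i => hx.2 i
    exact h1.to_subtype
  -- restriction maps
  set r : ∀ m : ℕ, ((Fin (j + 2) → V) → ℝ) →ₗ[ℝ]
      ({x : Fin (j + 2) → V // IsSimplexTuple K (simpBall K m y) x} → ℝ) :=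
    fun m => LinearMap.funLeft ℝ ℝ Subtype.val with hrdef
  set W : (m : ℕ) → ℕ → Submodule ℝ
      ({x : Fin (j + 2) → V // IsSimplexTuple K (simpBall K m y) x} → ℝ) :=
    fun m n => (Z n).map (r m) with hWdef
  -- stabilization
  have hstab : ∀ m : ℕ, ∃ N, ∀ n, N ≤ n → W m n = W m N := by
    intro m
    haveI := hfin m
    have hmono : ∀ ⦃n n' : ℕ⦄, n ≤ n' → W m n' ≤ W m n := by
      intro n n' hnn'
      apply Submodule.map_mono
      intro f hf
      rw [hZmem] at hf ⊢
      intro x hx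
      exact hf x (hx.mono (simpBall_mono hnn' y))
    obtain ⟨N, hN⟩ := IsArtinian.monotone_stabilizes (R := ℝ)
      ⟨fun n => OrderDual.toDual (W m n), fun a b hab => hmono hab⟩
    exact ⟨N, fun n hn => (congrArg OrderDual.ofDual (hN n hn)).symm⟩
  choose N hN using hstab
  set M : ℕ → ℕ := fun m => max m ((Finset.range (m + 1)).sup N) with hMdef
  have hMm : ∀ m, m ≤ M m := fun m => le_max_left _ _
  have hNM : ∀ m, N m ≤ M m := fun m =>
    le_trans (Finset.le_sup (Finset.mem_range.mpr (Nat.lt_succ_self m))) (le_max_right _ _)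
  have hNM' : ∀ m, N m ≤ M (m + 1) := fun m =>
    le_trans (Finset.le_sup (Finset.mem_range.mpr (by omega))) (le_max_right _ _)
  -- the key extension step
  have key : ∀ (m : ℕ) (f : (Fin (j + 2) → V) → ℝ), f ∈ Z (M m) →
      ∃ g, g ∈ Z (M (m + 1)) ∧
        ∀ x : Fin (j + 2) → V, IsSimplexTuple K (simpBall K m y) x → g x = f x := by
    intro m f hf
    have h1 : r m f ∈ W m (M m) := Submodule.mem_map_of_mem hf
    have h2 : W m (M m) = W m (N m) := hN m (M m) (hNM m)
    have h3 : W m (M (m + 1)) = W m (N m) := hN m (M (m + 1)) (hNM' m)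
    rw [h2, ← h3] at h1
    obtain ⟨g, hg, hge⟩ := Submodule.mem_map.mp h1
    exact ⟨g, hg, fun x hx => congrFun hge ⟨x, hx⟩⟩
  choose step hstep1 hstep2 using key
  refine ⟨M R, hMm R, ?_⟩
  intro f hf
  have hfZ : f ∈ Z (M R) := by rw [hZmem]; exact hf
  -- the compatible sequence of cocycles
  obtain ⟨F, hF0, hFmem, hFsucc⟩ : ∃ F : ℕ → ((Fin (j + 2) → V) → ℝ),
      F 0 = f ∧ (∀ k, F k ∈ Z (M (R + k))) ∧
      (∀ k (x : Fin (j + 2) → V), IsSimplexTuple K (simpBall K (R + k) y) x →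
        F (k + 1) x = F k x) := by
    exact
      let F' : ∀ k : ℕ, {h : (Fin (j + 2) → V) → ℝ // h ∈ Z (M (R + k))} := fun k =>
        Nat.rec ⟨f, hfZ⟩ (fun k p => ⟨step (R + k) p.1 p.2, hstep1 _ _ _⟩) k
      ⟨fun k => (F' k).1, rfl, fun k => (F' k).2,
        fun k => hstep2 (R + k) (F' k).1 (F' k).2⟩
  have hchain : ∀ k k', k ≤ k' → ∀ x : Fin (j + 2) → V,
      IsSimplexTuple K (simpBall K (R + k) y) x → F k' x = F k x := by
    intro k k' hkk'
    induction k', hkk' using Nat.le_induction with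
    | base => intro x _; rfl
    | succ k' hk ih =>
      intro x hx
      rw [hFsucc k' x (hx.mono (simpBall_mono (by omega) y)), ih x hx]
  -- the limit cochain
  obtain ⟨h, hval, hzero⟩ : ∃ h : (Fin (j + 2) → V) → ℝ,
      (∀ (x : Fin (j + 2) → V) (k : ℕ), IsSimplexTuple K (simpBall K (R + k) y) x →
        h x = F k x) ∧
      (∀ x : Fin (j + 2) → V,
        ¬(∃ k, IsSimplexTuple K (simpBall K (R + k) y) x) → h x = 0) := by
    refine ⟨fun x => if hx : ∃ k, IsSimplexTuple K (simpBall K (R + k) y) x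
        then F (Nat.find hx) x else 0, ?_, ?_⟩
    · intro x k hk
      have hx : ∃ k, IsSimplexTuple K (simpBall K (R + k) y) x := ⟨k, hk⟩
      dsimp only
      rw [dif_pos hx]
      exact (hchain (Nat.find hx) k (Nat.find_le hk) x (Nat.find_spec hx)).symm
    · intro x hx
      dsimp only
      rw [dif_neg hx]
  -- the limit is a global cocycle
  have hcocyc : ∀ x : Fin (j + 3) → V, IsSimplexTuple K Set.univ x →
      simpCoboundary (j + 1) h x = 0 := by
    intro x hx
    by_cases hball : ∃ k, ∀ i, x i ∈ simpBall K (R + k) y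
    · obtain ⟨k, hk⟩ := hball
      have hxt : IsSimplexTuple K (simpBall K (R + k) y) x := ⟨hx.1, hk⟩
      have hcg : simpCoboundary (j + 1) h x = simpCoboundary (j + 1) (F k) x :=
        simpCoboundary_congr (fun ℓ => hval _ k (hxt.face hdown ℓ))
      rw [hcg]
      exact (hFmem k) x (hxt.mono (simpBall_mono (hMm (R + k)) y))
    · have hfz : ∀ ℓ : Fin (j + 3), h (x ∘ Fin.succAbove ℓ) = 0 := by
        intro ℓ
        apply hzero
        rintro ⟨k, hk⟩
        apply hball
        exact ⟨k + 1, tuple_absorb hdown hx.1 (hk.2 0)⟩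
      refine Finset.sum_eq_zero fun ℓ _ => by rw [hfz ℓ, mul_zero]
  obtain ⟨g, hg⟩ := hvan h hcocyc
  refine ⟨g, fun x hx => ?_⟩
  have h1 : h x = F 0 x := hval x 0 hx
  have h2 : f x = h x := by rw [h1, hF0]
  rw [h2]
  exact hg x ⟨hx.1, fun i => Set.mem_univ _⟩

end Core


lemma pervertex {V : Type*} [DecidableEq V] (K : Set (Finset V))
    (hdown : ∀ s ∈ K, ∀ t, t ⊆ s → t ∈ K)
    (hbddgeo : ∀ v : V, {s ∈ K | v ∈ s}.Finite)
    (L : ℕ) (hvanish : CohoMapVanishes K (Set.univ : Set V) (Set.univ : Set V) L)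
    (y : V) (R : ℕ) :
    ∃ R' : ℕ, R ≤ R' ∧ CohoMapVanishes K (simpBall K R y) (simpBall K R' y) L := by
  classical
  have hA : ∀ j : ℕ, ∃ R', R ≤ R' ∧ (j + 1 ≤ L → ∀ f : (Fin (j + 2) → V) → ℝ,
      (∀ x : Fin (j + 3) → V, IsSimplexTuple K (simpBall K R' y) x →
        simpCoboundary (j + 1) f x = 0) →
      ∃ g : (Fin (j + 1) → V) → ℝ, ∀ x : Fin (j + 2) → V,
        IsSimplexTuple K (simpBall K R y) x → f x = simpCoboundary j g x) := by
    intro j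
    by_cases hj : j + 1 ≤ L
    · obtain ⟨R', h1, h2⟩ := lemA K hdown hbddgeo j (hvanish.2 j hj) y R
      exact ⟨R', h1, fun _ => h2⟩
    · exact ⟨R, le_rfl, fun h => absurd h hj⟩
  choose r hr1 hr2 using hA
  refine ⟨max R ((Finset.range L).sup r), le_max_left _ _, ?_, ?_⟩
  · intro f hf
    refine ⟨f (fun _ => y), fun x hx => ?_⟩
    have h1 := h0_const f hf (x 0) (simpBall_mono (le_max_left _ _) y (hx.2 0))
    have hx0 : x = fun _ => x 0 := funext fun i => by rw [Subsingleton.elim i 0]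
    rw [hx0]
    exact h1
  · intro j hj f hf
    refine hr2 j hj f ?_
    intro x hx
    refine hf x (hx.mono (simpBall_mono ?_ y))
    exact le_trans (Finset.le_sup (Finset.mem_range.mpr hj)) (le_max_right _ _)

/-- Let `X = (V, K)` be a bounded geometry simplicial complex with a cocompact
automorphism group action and vanishing (reduced) cohomology up to degree `L`.
Then `X` has uniformly vanishing cohomology up to degree `L`: for every `R` there is
`R̃` such that for every vertex `y` the maps `H^j(B(y,R̃)) → H^j(B(y,R))` induced by
inclusion vanish for `j = 0, …, L`. -/
theorem uniform_vanishing_of_cocompact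
    (V : Type*) [DecidableEq V] (K : Set (Finset V))
    (hdown : ∀ s ∈ K, ∀ t, t ⊆ s → t ∈ K)
    (hvert : ∀ v : V, ({v} : Finset V) ∈ K)
    (hbddgeo : ∀ v : V, {s ∈ K | v ∈ s}.Finite)
    (G : Type*) [Group G] (ρ : G →* Equiv.Perm V)
    (hGK : ∀ (g : G) (s : Finset V), s ∈ K → s.image (ρ g) ∈ K)
    (hcocompact : ∃ F : Finset V, ∀ v : V, ∃ g : G, ρ g v ∈ F)
    (L : ℕ)
    (hvanish : CohoMapVanishes K (Set.univ : Set V) (Set.univ : Set V) L) :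
    ∀ R : ℕ, ∃ R' : ℕ, R ≤ R' ∧
      ∀ y : V, CohoMapVanishes K (simpBall K R y) (simpBall K R' y) L := by

  classical
  intro R
  obtain ⟨Fs, hFs⟩ := hcocompact
  have hper : ∀ v : V, ∃ R', R ≤ R' ∧
      CohoMapVanishes K (simpBall K R v) (simpBall K R' v) L :=
    fun v => pervertex K hdown hbddgeo L hvanish v R
  choose r hr1 hr2 using hper
  refine ⟨max R (Fs.sup r), le_max_left _ _, ?_⟩
  intro y
  obtain ⟨g, hg⟩ := hFs y
  set e : Equiv.Perm V := ρ g with hedef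
  have he : ∀ s ∈ K, Finset.image (⇑e) s ∈ K := fun s hs => hGK g s hs
  have he' : ∀ s ∈ K, Finset.image (⇑e.symm) s ∈ K := by
    intro s hs
    have hcoe : ⇑e.symm = ⇑(ρ g⁻¹) := by
      rw [map_inv]; rfl
    rw [hcoe]
    exact hGK g⁻¹ s hs
  apply cohoVanishes_image e he he'
  rw [← ball_image e he he' R y, ← ball_image e he he' (max R (Fs.sup r)) y]
  refine cohoVanishes_mono (simpBall_mono ?_ (e y)) (hr2 (e y))
  exact le_trans (Finset.le_sup hg) (le_max_right _ _)
end
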